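/- (Key testing-vector inequality.) There exists a constant μ > 0, depending only on the family of vectors {G_i}_{i∈J}, with the following property. Suppose φ satisfies the stated assumption. Let x ∈ ℝ^N and α ≥ 0 satisfy the first-order inequality: Σ_{i∈S(x)} φ'(|G_iᵀ x|)·(G_iᵀ x / |G_iᵀ x|)·(G_iᵀ v) ≤ α‖v‖₂ for every v ∈ K(S(x)). Then φ'(|G_jᵀ x|) ≤ α·μ for every j ∈ S(x). -/
import Mathlib


/-- The dot product `gᵀ x` of two vectors in `ℝ^N`. -/
noncomputable def dotp {N : ℕ} (g x : Fin N → ℝ) : ℝ := ∑ l, g l * x l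

/-- The Euclidean norm `‖x‖₂` on `ℝ^N`. -/
noncomputable def norm2 {N : ℕ} (x : Fin N → ℝ) : ℝ := Real.sqrt (∑ l, (x l) ^ 2)

/-- Assumptions on the potential function `φ` (with derivative `φ'` on `(0,∞)`):
continuous, concave and coercive on `[0,∞)` with `φ(0) = 0`; continuously
differentiable on `(0,∞)` with positive derivative there, `φ'(0⁺) = +∞`, and
`φ'` Lipschitz on every `[α,∞)` with `α > 0`. -/
structure PhiAssumption (φ φ' : ℝ → ℝ) : Prop where
  nonneg : ∀ t : ℝ, 0 ≤ t → 0 ≤ φ t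
  zero : φ 0 = 0
  cont : ContinuousOn φ (Set.Ici 0)
  concave : ConcaveOn ℝ (Set.Ici 0) φ
  coercive : Filter.Tendsto φ Filter.atTop Filter.atTop
  hasDeriv : ∀ t : ℝ, 0 < t → HasDerivAt φ (φ' t) t
  derivCont : ContinuousOn φ' (Set.Ioi 0)
  derivPos : ∀ t : ℝ, 0 < t → 0 < φ' t
  derivAtZero : Filter.Tendsto φ' (nhdsWithin 0 (Set.Ioi 0)) Filter.atTop
  derivLip : ∀ α : ℝ, 0 < α → ∃ L : ℝ, ∀ s : ℝ, α ≤ s → ∀ t : ℝ, α ≤ t →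
    |φ' s - φ' t| ≤ L * |s - t|



lemma dotp_smul {N : ℕ} (g x : Fin N → ℝ) (c : ℝ) : dotp g (c • x) = c * dotp g x := by
  unfold dotp
  rw [Finset.mul_sum]
  refine Finset.sum_congr rfl fun l _ => ?_
  simp [Pi.smul_apply, smul_eq_mul]; ring

lemma sign_mul_self' (t : ℝ) : (SignType.sign t : ℝ) * t = |t| := by
  rcases lt_trichotomy t 0 with h|h|h
  · simp [sign_neg h, abs_of_neg h]
  · simp [h]
  · simp [sign_pos h, abs_of_pos h]

lemma sign_eq_div (t : ℝ) (h : t ≠ 0) : t / |t| = (SignType.sign t : ℝ) := by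
  rcases lt_trichotomy t 0 with h'|h'|h'
  · rw [sign_neg h', abs_of_neg h']; simp; field_simp
  · exact absurd h' h
  · rw [sign_pos h', abs_of_pos h']; simp [div_self h]

lemma norm2_nonneg {N : ℕ} (x : Fin N → ℝ) : 0 ≤ norm2 x := Real.sqrt_nonneg _

/-- The sign-pattern cone for the family `G`, pattern `σ` and index `j`. -/
def cone {N : ℕ} {ι : Type} (G : ι → Fin N → ℝ) (σ : ι → SignType) (j : ι) :
    Set (Fin N → ℝ) :=
  {v | (∀ i, σ i = 0 → dotp (G i) v = 0) ∧
    (∀ i, 0 ≤ (σ i : ℝ) * dotp (G i) v) ∧ 1 ≤ (σ j : ℝ) * dotp (G j) v}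

open Classical in
/-- A witness in each nonempty cone. -/
noncomputable def coneWit {N : ℕ} {ι : Type} (G : ι → Fin N → ℝ)
    (σ : ι → SignType) (j : ι) : Fin N → ℝ :=
  if h : (cone G σ j).Nonempty then h.choose else 0

lemma coneWit_mem {N : ℕ} {ι : Type} (G : ι → Fin N → ℝ)
    (σ : ι → SignType) (j : ι) (h : (cone G σ j).Nonempty) :
    coneWit G σ j ∈ cone G σ j := by
  rw [coneWit, dif_pos h]
  exact h.choose_spec

open Classical in
/-- key testing-vector inequality. There is a constant `μ > 0`,
depending only on the family `{G_i}`, such that for every `φ` satisfying the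
assumptions, every `x` and every `α ≥ 0`: if the first-order inequality
`Σ_{i∈S(x)} φ'(|G_iᵀ x|)·(G_iᵀ x/|G_iᵀ x|)·(G_iᵀ v) ≤ α‖v‖₂` holds for all
`v ∈ K(S(x))`, then `φ'(|G_jᵀ x|) ≤ α·μ` for every `j ∈ S(x)`. -/
theorem testing_vector_inequality {N : ℕ} {ι : Type} [Fintype ι]
    (G : ι → Fin N → ℝ) :
    ∃ μ > (0 : ℝ), ∀ (φ φ' : ℝ → ℝ), PhiAssumption φ φ' →
      ∀ (x : Fin N → ℝ) (α : ℝ), 0 ≤ α →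
      (∀ v : Fin N → ℝ, (∀ i : ι, dotp (G i) x = 0 → dotp (G i) v = 0) →
        (∑ i ∈ Finset.univ.filter (fun i : ι => dotp (G i) x ≠ 0),
          φ' |dotp (G i) x| * (dotp (G i) x / |dotp (G i) x|) * dotp (G i) v)
        ≤ α * norm2 v) →
      ∀ j : ι, dotp (G j) x ≠ 0 → φ' |dotp (G j) x| ≤ α * μ := by

  classical
  -- the range of norms of witnesses is finite, hence bounded above
  have hfin : (Set.range (fun p : (ι → SignType) × ι =>
      norm2 (coneWit G p.1 p.2))).Finite := Set.finite_range _
  obtain ⟨M, hM⟩ := hfin.bddAbove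
  refine ⟨1 + max M 0, by positivity, ?_⟩
  have hwle : ∀ (σ : ι → SignType) (j : ι), norm2 (coneWit G σ j) ≤ 1 + max M 0 := by
    intro σ j
    have : norm2 (coneWit G σ j) ≤ M := hM ⟨(σ, j), rfl⟩
    have h2 : M ≤ max M 0 := le_max_left _ _
    linarith
  intro φ φ' hφ x α hα hineq j hj
  set σ : ι → SignType := fun i => SignType.sign (dotp (G i) x) with hσdef
  have habsj : (0:ℝ) < |dotp (G j) x| := abs_pos.mpr hj
  -- x / |G_j x| belongs to the cone
  have hmem : (|dotp (G j) x|⁻¹ • x) ∈ cone G σ j := by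
    refine ⟨?_, ?_, ?_⟩
    · intro i hi
      have hzero : dotp (G i) x = 0 := by
        simpa [hσdef, sign_eq_zero_iff] using hi
      rw [dotp_smul, hzero, mul_zero]
    · intro i
      rw [dotp_smul]
      have : (σ i : ℝ) * (|dotp (G j) x|⁻¹ * dotp (G i) x)
          = |dotp (G j) x|⁻¹ * ((SignType.sign (dotp (G i) x) : ℝ) * dotp (G i) x) := by
        simp only [hσdef]; ring
      rw [this, sign_mul_self']
      positivity
    · rw [dotp_smul]
      have : (σ j : ℝ) * (|dotp (G j) x|⁻¹ * dotp (G j) x)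
          = |dotp (G j) x|⁻¹ * ((SignType.sign (dotp (G j) x) : ℝ) * dotp (G j) x) := by
        simp only [hσdef]; ring
      rw [this, sign_mul_self', inv_mul_cancel₀ (ne_of_gt habsj)]
  have hne : (cone G σ j).Nonempty := ⟨_, hmem⟩
  obtain ⟨hv0, hvnn, hvj⟩ := coneWit_mem G σ j hne
  set v : Fin N → ℝ := coneWit G σ j with hvdef
  -- v is in K(S(x))
  have hKv : ∀ i : ι, dotp (G i) x = 0 → dotp (G i) v = 0 := by
    intro i hi
    exact hv0 i (by simp [hσdef, sign_eq_zero_iff, hi])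
  have hsum := hineq v hKv
  -- rewrite the terms of the sum
  have hterm : ∀ i ∈ Finset.univ.filter (fun i : ι => dotp (G i) x ≠ 0),
      φ' |dotp (G i) x| * (dotp (G i) x / |dotp (G i) x|) * dotp (G i) v
        = φ' |dotp (G i) x| * ((σ i : ℝ) * dotp (G i) v) := by
    intro i hi
    rw [Finset.mem_filter] at hi
    rw [sign_eq_div _ hi.2]
    simp only [hσdef]; ring
  have hpos : ∀ i : ι, dotp (G i) x ≠ 0 → 0 < φ' |dotp (G i) x| :=
    fun i hi => hφ.derivPos _ (abs_pos.mpr hi)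
  have hsingle : φ' |dotp (G j) x|
      ≤ ∑ i ∈ Finset.univ.filter (fun i : ι => dotp (G i) x ≠ 0),
          φ' |dotp (G i) x| * (dotp (G i) x / |dotp (G i) x|) * dotp (G i) v := by
    rw [Finset.sum_congr rfl hterm]
    have hjmem : j ∈ Finset.univ.filter (fun i : ι => dotp (G i) x ≠ 0) := by
      simp [hj]
    calc φ' |dotp (G j) x| = φ' |dotp (G j) x| * 1 := by ring
      _ ≤ φ' |dotp (G j) x| * ((σ j : ℝ) * dotp (G j) v) :=
          mul_le_mul_of_nonneg_left hvj (le_of_lt (hpos j hj))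
      _ ≤ ∑ i ∈ Finset.univ.filter (fun i : ι => dotp (G i) x ≠ 0),
            φ' |dotp (G i) x| * ((σ i : ℝ) * dotp (G i) v) := by
          refine Finset.single_le_sum (f := fun i => φ' |dotp (G i) x| * ((σ i : ℝ) * dotp (G i) v)) (fun i hi => ?_) hjmem
          rw [Finset.mem_filter] at hi
          exact mul_nonneg (le_of_lt (hpos i hi.2)) (hvnn i)
  calc φ' |dotp (G j) x| ≤ α * norm2 v := hsingle.trans hsum
    _ ≤ α * (1 + max M 0) := mul_le_mul_of_nonneg_left (hwle σ j) hα
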